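/- arXiv:2201.06375 — 2 statements merged into one kernel-verified Lean document; each statement's English description precedes it below -/
import Mathlib

section
/- Let V be an n-dimensional real inner product space with orthonormal basis e_1,…,e_n, and let ω ∈ Λ^p V. Then ∑_{i=1}^n |e_i ∧ ω|² = (n-p)·|ω|². -/
open Finset

/-- The space of alternating `p`-forms on an `n`-dimensional real inner product space,
expressed in components with respect to a fixed orthonormal basis: a `p`-form is
determined by its values on increasing `p`-tuples of basis vectors, i.e. by a function
on `p`-element subsets of `Fin n`.  The induced inner product makes wedges of
orthonormal vectors orthonormal, so `‖ω‖² = ∑_s (ω s)²`. -/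
def Form (n p : ℕ) : Type := {s : Finset (Fin n) // s.card = p} → ℝ

noncomputable instance (n p : ℕ) : AddCommGroup (Form n p) := Pi.addCommGroup
noncomputable instance (n p : ℕ) : Module ℝ (Form n p) := Pi.module _ _ _

/-- The sign `(-1)^{#{j ∈ s : j < i}}` occurring in wedge/interior products. -/
def sgn {n : ℕ} (s : Finset (Fin n)) (i : Fin n) : ℝ :=
  (-1 : ℝ) ^ (s.filter (fun j => j < i)).card

/-- Interior product `e_i ⌟ ω` of a `(p+1)`-form with the `i`-th orthonormal basis vector. -/
noncomputable def intr {n p : ℕ} (i : Fin n) (ω : Form n (p + 1)) : Form n p :=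
  fun s =>
    if h : i ∈ s.1 then 0
    else sgn s.1 i * ω ⟨insert i s.1, by rw [Finset.card_insert_of_notMem h, s.2]⟩

/-- Wedge product `e_i ∧ ω` of the `i`-th orthonormal basis vector with a `p`-form. -/
noncomputable def wdg {n p : ℕ} (i : Fin n) (ω : Form n p) : Form n (p + 1) :=
  fun s =>
    if h : i ∈ s.1 then
      sgn (s.1.erase i) i * ω ⟨s.1.erase i, by simp [Finset.card_erase_of_mem h, s.2]⟩
    else 0

/-- Interior product `X ⌟ ω` with an arbitrary vector `X = ∑ X_i e_i`. -/
noncomputable def intrV {n p : ℕ} (X : Fin n → ℝ) (ω : Form n (p + 1)) : Form n p :=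
  fun s => ∑ i, X i * intr i ω s

/-- Wedge product `α ∧ ω` with an arbitrary 1-form `α = ∑ α_i e_i`. -/
noncomputable def wdgV {n p : ℕ} (α : Fin n → ℝ) (ω : Form n p) : Form n (p + 1) :=
  fun s => ∑ i, α i * wdg i ω s

/-- The squared norm of a `p`-form for the induced inner product. -/
noncomputable def normSq {n p : ℕ} (ω : Form n p) : ℝ := ∑ s, (ω s) ^ 2

lemma comb_lemma {n p : ℕ} (F : Finset (Fin n) → ℝ) :
    ∑ s ∈ univ.filter (fun t : Finset (Fin n) => t.card = p + 1), ∑ i ∈ s, F (s.erase i)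
      = ∑ t ∈ univ.filter (fun t : Finset (Fin n) => t.card = p), ∑ i ∈ tᶜ, F t := by
  rw [Finset.sum_sigma', Finset.sum_sigma']
  refine Finset.sum_nbij' (fun x => ⟨x.1.erase x.2, x.2⟩) (fun x => ⟨insert x.2 x.1, x.2⟩)
    ?_ ?_ ?_ ?_ ?_
  · rintro ⟨s, i⟩ hs
    simp only [Finset.mem_sigma, Finset.mem_filter, Finset.mem_univ, true_and] at hs ⊢
    obtain ⟨hc, hi⟩ := hs
    exact ⟨by rw [Finset.card_erase_of_mem hi, hc]; rfl, by simp⟩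
  · rintro ⟨t, i⟩ ht
    simp only [Finset.mem_sigma, Finset.mem_filter, Finset.mem_univ, true_and,
      Finset.mem_compl] at ht ⊢
    obtain ⟨hc, hi⟩ := ht
    exact ⟨by rw [Finset.card_insert_of_notMem hi, hc], Finset.mem_insert_self _ _⟩
  · rintro ⟨s, i⟩ hs
    simp only [Finset.mem_sigma, Finset.mem_filter, Finset.mem_univ, true_and] at hs
    simp [Finset.insert_erase hs.2]
  · rintro ⟨t, i⟩ ht
    simp only [Finset.mem_sigma, Finset.mem_filter, Finset.mem_univ, true_and,
      Finset.mem_compl] at ht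
    simp [Finset.erase_insert ht.2]
  · rintro ⟨s, i⟩ _
    rfl

/-- Main theorem. -/
theorem stmt_5 (n p : ℕ) (hpn : p ≤ n) (ω : Form n p) :
    ∑ i : Fin n, normSq (wdg i ω) = ((n : ℝ) - (p : ℝ)) * normSq ω := by
  classical
  set Ω : Finset (Fin n) → ℝ := fun t => if h : t.card = p then ω ⟨t, h⟩ else 0 with hΩ
  have key : ∀ (i : Fin n) (s : {s : Finset (Fin n) // s.card = p + 1}),
      (wdg i ω s) ^ 2 = if i ∈ s.1 then Ω (s.1.erase i) ^ 2 else 0 := by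
    intro i s
    by_cases h : i ∈ s.1
    · have hc : (s.1.erase i).card = p := by
        simp [Finset.card_erase_of_mem h, s.2]
      simp only [wdg, dif_pos h, if_pos h, hΩ, dif_pos hc, mul_pow, sgn]
      rw [← pow_mul, mul_comm ((s.1.erase i).filter fun j => j < i).card 2, pow_mul]
      norm_num
    · simp [wdg, h]
  have lhs : ∑ i : Fin n, normSq (wdg i ω)
      = ∑ s ∈ univ.filter (fun t : Finset (Fin n) => t.card = p + 1),
          ∑ i ∈ s, Ω (s.erase i) ^ 2 := by
    have e1 : ∑ s ∈ univ.filter (fun t : Finset (Fin n) => t.card = p + 1),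
        (fun t : Finset (Fin n) => ∑ i ∈ t, Ω (t.erase i) ^ 2) s
        = ∑ s : {s : Finset (Fin n) // s.card = p + 1},
            (fun t : Finset (Fin n) => ∑ i ∈ t, Ω (t.erase i) ^ 2) s.1 :=
      Finset.sum_subtype _ (by simp) _
    rw [show ∑ i : Fin n, normSq (wdg i ω)
        = ∑ s : {s : Finset (Fin n) // s.card = p + 1}, ∑ i : Fin n, (wdg i ω s) ^ 2 from
      Finset.sum_comm, e1]
    refine Finset.sum_congr rfl fun s _ => ?_
    simp only [key]
    rw [Finset.sum_ite_mem, Finset.univ_inter]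
  have rhs : normSq ω = ∑ t ∈ univ.filter (fun t : Finset (Fin n) => t.card = p), Ω t ^ 2 := by
    have e2 : ∑ t ∈ univ.filter (fun t : Finset (Fin n) => t.card = p),
        (fun t : Finset (Fin n) => Ω t ^ 2) t
        = ∑ t : {t : Finset (Fin n) // t.card = p}, (fun t : Finset (Fin n) => Ω t ^ 2) t.1 :=
      Finset.sum_subtype _ (by simp) _
    rw [e2]
    refine Finset.sum_congr rfl fun t _ => ?_
    simp [hΩ, t.2]
  rw [lhs, rhs, comb_lemma (fun t => Ω t ^ 2), Finset.mul_sum]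
  refine Finset.sum_congr rfl fun t ht => ?_
  simp only [Finset.mem_filter, Finset.mem_univ, true_and] at ht
  rw [Finset.sum_const, Finset.card_compl, ht, Fintype.card_fin, nsmul_eq_mul,
    Nat.cast_sub hpn]
end

section
/- Let A be a symmetric n×n real matrix with eigenvalues (principal curvatures) k_1,…,k_n, acting on an n-dimensional inner product space V, and let A^{[p]} denote its canonical extension to Λ^p V defined by (A^{[p]}ω)(X_1,…,X_p) = ∑_k ω(X_1,…,A X_k,…,X_p). Then for any ω ∈ Λ^p V, −⟨(A²)^{[p]}ω, ω⟩ + |A^{[p]}ω|² ≤ γ·p(p−1)·|ω|², where γ = max{k_i k_j : i ≠ j}. -/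
open Finset

/-- The canonical (derivation) extension to `p`-forms of a symmetric endomorphism which is
diagonal with eigenvalues `k i` in the fixed orthonormal basis:
`(A^{[p]} ω)(e_{i_1}, …, e_{i_p}) = (∑_{j ∈ s} k j) ω(e_{i_1}, …, e_{i_p})`. -/
noncomputable def ext {n p : ℕ} (k : Fin n → ℝ) (ω : Form n p) : Form n p :=
  fun s => (∑ i ∈ s.1, k i) * ω s

/-- Let `A` be a symmetric endomorphism of an `n`-dimensional inner product space with
eigenvalues (principal curvatures) `k_1, …, k_n` (expressed in its orthonormal eigenbasis),
`A^{[p]}` its canonical extension to `p`-forms and `(A²)^{[p]}` the extension of `A²`.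
Then `−⟨(A²)^{[p]} ω, ω⟩ + |A^{[p]} ω|² ≤ γ p (p−1) |ω|²` where
`γ = max {k_i k_j : i ≠ j}`. -/
theorem stmt_16 (n p : ℕ) (hn : 2 ≤ n) (hp : 1 ≤ p) (k : Fin n → ℝ) (γ : ℝ)
    (hγ : IsGreatest {x : ℝ | ∃ i j : Fin n, i ≠ j ∧ x = k i * k j} γ)
    (ω : Form n p) :
    -(∑ s, ext (fun i => (k i) ^ 2) ω s * ω s) + normSq (ext k ω)
      ≤ γ * (p : ℝ) * ((p : ℝ) - 1) * normSq ω := by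
  have key : ∀ s : {s : Finset (Fin n) // s.card = p},
      -(ext (fun i => (k i) ^ 2) ω s * ω s) + (ext k ω s) ^ 2
        ≤ γ * (p : ℝ) * ((p : ℝ) - 1) * (ω s) ^ 2 := by
    intro s
    have hid : (∑ i ∈ s.1, k i) ^ 2 - ∑ i ∈ s.1, (k i) ^ 2
        = ∑ i ∈ s.1, ∑ j ∈ s.1.erase i, k i * k j := by
      have h1 : (∑ i ∈ s.1, k i) ^ 2 = ∑ i ∈ s.1, ∑ j ∈ s.1, k i * k j := by
        rw [sq, Finset.sum_mul_sum]
      rw [h1, ← Finset.sum_sub_distrib]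
      refine Finset.sum_congr rfl fun i hi => ?_
      rw [← Finset.add_sum_erase _ _ hi, sq]
      ring
    have hS : ∑ i ∈ s.1, ∑ j ∈ s.1.erase i, k i * k j ≤ γ * (p : ℝ) * ((p : ℝ) - 1) := by
      have h1 : ∑ i ∈ s.1, ∑ j ∈ s.1.erase i, k i * k j
          ≤ ∑ i ∈ s.1, ∑ _j ∈ s.1.erase i, γ := by
        refine Finset.sum_le_sum fun i hi => Finset.sum_le_sum fun j hj => ?_
        exact hγ.2 ⟨i, j, (Finset.ne_of_mem_erase hj).symm, rfl⟩
      refine h1.trans_eq ?_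
      have h2 : ∀ i ∈ s.1, ∑ _j ∈ s.1.erase i, γ = ((p : ℝ) - 1) * γ := by
        intro i hi
        rw [Finset.sum_const, Finset.card_erase_of_mem hi, s.2, nsmul_eq_mul,
          Nat.cast_sub hp, Nat.cast_one]
      rw [Finset.sum_congr rfl h2, Finset.sum_const, s.2, nsmul_eq_mul]
      ring
    have hω : (0:ℝ) ≤ (ω s) ^ 2 := sq_nonneg _
    have := mul_le_mul_of_nonneg_right hS hω
    calc -(ext (fun i => (k i) ^ 2) ω s * ω s) + (ext k ω s) ^ 2
        = ((∑ i ∈ s.1, k i) ^ 2 - ∑ i ∈ s.1, (k i) ^ 2) * (ω s) ^ 2 := by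
          simp only [_root_.ext]; ring
      _ = (∑ i ∈ s.1, ∑ j ∈ s.1.erase i, k i * k j) * (ω s) ^ 2 := by rw [hid]
      _ ≤ γ * (p : ℝ) * ((p : ℝ) - 1) * (ω s) ^ 2 := this
  have lhs_eq : -(∑ s, ext (fun i => (k i) ^ 2) ω s * ω s) + normSq (ext k ω)
      = ∑ s, (-(ext (fun i => (k i) ^ 2) ω s * ω s) + (ext k ω s) ^ 2) := by
    rw [normSq, Finset.sum_add_distrib, Finset.sum_neg_distrib]
  rw [lhs_eq, normSq, Finset.mul_sum]
  exact Finset.sum_le_sum fun s _ => key s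
end
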